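/- Let E be a real inner product space of dimension n and let A be a symmetric (self-adjoint) endomorphism of E, and let k ≤ n. Then the sum of the k smallest eigenvalues of A (counted with multiplicity) equals the minimum over all orthonormal k-tuples (e₁,…,e_k) in E of Σᵢ₌₁ᵏ ⟨A eᵢ, eᵢ⟩. In particular, the sum of the k smallest eigenvalues of A is nonnegative if and only if Σᵢ₌₁ᵏ ⟨A eᵢ, eᵢ⟩ ≥ 0 for every orthonormal k-tuple (e₁,…,e_k) in E. -/

import Mathlib

/-!
Expand in an orthonormal eigenbasis `b` of `A` with eigenvalues `λⱼ`: for an orthonormal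
family `e₁, …, e_k`, `∑ᵢ ⟪A eᵢ, eᵢ⟫ = ∑ⱼ λⱼ cⱼ` with `cⱼ = ∑ᵢ ⟪eᵢ, bⱼ⟫²`, where
`0 ≤ cⱼ ≤ 1` by Bessel's inequality and `∑ⱼ cⱼ = k` by Parseval. Such a weighted sum is at least
`∑_{j ∈ s} λⱼ` for a `k`-set `s` minimising that sum: by an exchange argument some `t` separates
the `λⱼ` on `s` from those off `s`, and the weight missing on `s` equals the weight placed off
`s`. The eigenvectors `bⱼ`, `j ∈ s`, attain the bound.
-/

open scoped RealInnerProductSpace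
open Finset

theorem apply_le_of_sum_minimal {ι M : Type*} [AddCommMonoid M] [LinearOrder M]
    [IsOrderedCancelAddMonoid M] (μ : ι → M) {s : Finset ι}
    (hmin : ∀ t : Finset ι, #t = #s → ∑ i ∈ s, μ i ≤ ∑ i ∈ t, μ i)
    {i j : ι} (hi : i ∈ s) (hj : j ∉ s) : μ i ≤ μ j := by
  classical
  have hj' : j ∉ s.erase i := fun h => hj (mem_of_mem_erase h)
  have hswap := hmin (insert j (s.erase i)) <| by
    rw [card_insert_of_notMem hj', card_erase_add_one hi]
  rw [sum_insert hj', ← add_sum_erase s μ hi] at hswap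
  exact le_of_add_le_add_right hswap

theorem sum_le_sum_mul_of_forall_le_of_forall_ge {ι : Type*} [Fintype ι] (μ c : ι → ℝ)
    (s : Finset ι) (t : ℝ)
    (hs : ∀ i ∈ s, μ i ≤ t) (hsc : ∀ i ∉ s, t ≤ μ i)
    (hc0 : ∀ i, 0 ≤ c i) (hc1 : ∀ i, c i ≤ 1) (hc : ∑ i, c i = #s) :
    ∑ i ∈ s, μ i ≤ ∑ i, μ i * c i := by
  classical
  have hmass : ∑ i ∈ s, (1 - c i) = ∑ i ∈ sᶜ, c i := by
    rw [sum_sub_distrib, sum_const, nsmul_one, ← hc, ← sum_add_sum_compl s c]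
    ring
  have hin : ∑ i ∈ s, μ i * (1 - c i) ≤ ∑ i ∈ sᶜ, μ i * c i :=
    calc ∑ i ∈ s, μ i * (1 - c i) ≤ ∑ i ∈ s, t * (1 - c i) :=
          sum_le_sum fun i hi => mul_le_mul_of_nonneg_right (hs i hi) (sub_nonneg.2 (hc1 i))
      _ = ∑ i ∈ sᶜ, t * c i := by rw [← mul_sum, ← mul_sum, hmass]
      _ ≤ ∑ i ∈ sᶜ, μ i * c i :=
          sum_le_sum fun i hi => mul_le_mul_of_nonneg_right (hsc i (mem_compl.1 hi)) (hc0 i)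
  rw [← sum_add_sum_compl s fun i => μ i * c i]
  simp only [mul_sub, mul_one, sum_sub_distrib] at hin
  linarith

theorem inf'_powersetCard_sum_le_sum_mul {ι : Type*} [Fintype ι] {k : ℕ} (hk : 1 ≤ k)
    (hne : (univ.powersetCard k : Finset (Finset ι)).Nonempty) (μ c : ι → ℝ)
    (hc0 : ∀ i, 0 ≤ c i) (hc1 : ∀ i, c i ≤ 1) (hc : ∑ i, c i = k) :
    (univ.powersetCard k).inf' hne (fun s => ∑ i ∈ s, μ i) ≤ ∑ i, μ i * c i := by
  obtain ⟨s, hs, hs_eq⟩ := exists_mem_eq_inf' hne fun s => ∑ i ∈ s, μ i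
  have hcard : #s = k := (mem_powersetCard.1 hs).2
  have hmin (t : Finset ι) (ht : #t = #s) : ∑ i ∈ s, μ i ≤ ∑ i ∈ t, μ i :=
    hs_eq ▸ inf'_le _ (mem_powersetCard.2 ⟨subset_univ t, ht.trans hcard⟩)
  obtain ⟨i₀, hi₀, hmax⟩ := exists_max_image s μ (card_pos.1 (hcard ▸ hk))
  rw [hs_eq]
  exact sum_le_sum_mul_of_forall_le_of_forall_ge μ c s (μ i₀) hmax
    (fun j hj => apply_le_of_sum_minimal μ hmin hi₀ hj) hc0 hc1 (hcard ▸ hc)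

theorem Orthonormal.sum_sq_inner_le_one {ι E : Type*} [NormedAddCommGroup E]
    [InnerProductSpace ℝ E] [Fintype ι] {e : ι → E} (he : Orthonormal ℝ e) {v : E} (hv : ‖v‖ = 1) :
    ∑ i, ⟪e i, v⟫ ^ 2 ≤ 1 := by
  simpa [hv] using he.sum_inner_products_le (s := univ) v

theorem Orthonormal.sum_sum_sq_inner_eq_card {ι κ E : Type*} [NormedAddCommGroup E]
    [InnerProductSpace ℝ E] [Fintype ι] [Fintype κ] {e : ι → E} (he : Orthonormal ℝ e)
    (b : OrthonormalBasis κ ℝ E) :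
    ∑ j, ∑ i, ⟪e i, b j⟫ ^ 2 = Fintype.card ι := by
  rw [sum_comm]
  simp [b.sum_sq_inner_left, he.1]

namespace LinearMap.IsSymmetric

variable {E : Type*} [NormedAddCommGroup E] [InnerProductSpace ℝ E] [FiniteDimensional ℝ E]
  {n : ℕ} {A : E →ₗ[ℝ] E} (hA : A.IsSymmetric) (hn : Module.finrank ℝ E = n)

theorem inner_apply_self_eq_sum_eigenvalues_mul_sq (x : E) :
    ⟪A x, x⟫ = ∑ j, hA.eigenvalues hn j * ⟪x, hA.eigenvectorBasis hn j⟫ ^ 2 := by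
  rw [← (hA.eigenvectorBasis hn).sum_inner_mul_inner]
  refine sum_congr rfl fun j _ => ?_
  rw [hA, hA.apply_eigenvectorBasis, real_inner_smul_right, real_inner_comm _ x,
    RCLike.ofReal_real_eq_id, id_eq]
  ring

theorem inner_apply_eigenvectorBasis (j : Fin n) :
    ⟪A (hA.eigenvectorBasis hn j), hA.eigenvectorBasis hn j⟫ = hA.eigenvalues hn j := by
  simp [hA.apply_eigenvectorBasis, real_inner_smul_left, (hA.eigenvectorBasis hn).orthonormal.1 j]

theorem inf'_powersetCard_sum_eigenvalues_le {k : ℕ} (hk : 1 ≤ k)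
    (hne : (univ.powersetCard k : Finset (Finset (Fin n))).Nonempty)
    {e : Fin k → E} (he : Orthonormal ℝ e) :
    (univ.powersetCard k).inf' hne (fun s => ∑ i ∈ s, hA.eigenvalues hn i) ≤
      ∑ i, ⟪A (e i), e i⟫ := by
  set b := hA.eigenvectorBasis hn
  have hsum :
      ∑ i, ⟪A (e i), e i⟫ = ∑ j, hA.eigenvalues hn j * ∑ i, ⟪e i, b j⟫ ^ 2 := by
    simp_rw [hA.inner_apply_self_eq_sum_eigenvalues_mul_sq hn, mul_sum]
    exact sum_comm
  rw [hsum]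
  refine inf'_powersetCard_sum_le_sum_mul hk hne _ _ (fun j => sum_nonneg fun i _ => sq_nonneg _)
    (fun j => he.sum_sq_inner_le_one (b.orthonormal.1 j)) ?_
  simpa using he.sum_sum_sq_inner_eq_card b

theorem exists_orthonormal_sum_inner_eq_inf'_powersetCard {k : ℕ}
    (hne : (univ.powersetCard k : Finset (Finset (Fin n))).Nonempty) :
    ∃ e : Fin k → E, Orthonormal ℝ e ∧
      ∑ i, ⟪A (e i), e i⟫ =
        (univ.powersetCard k).inf' hne (fun s => ∑ i ∈ s, hA.eigenvalues hn i) := by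
  obtain ⟨s, hs, hs_eq⟩ := exists_mem_eq_inf' hne fun s => ∑ i ∈ s, hA.eigenvalues hn i
  let f := s.orderIsoOfFin (mem_powersetCard.1 hs).2
  refine ⟨fun i => hA.eigenvectorBasis hn (f i), ?_, ?_⟩
  · exact (hA.eigenvectorBasis hn).orthonormal.comp _ (Subtype.val_injective.comp f.injective)
  · rw [hs_eq, ← sum_coe_sort s]
    simp_rw [hA.inner_apply_eigenvectorBasis hn]
    exact f.toEquiv.sum_comp fun j : s => hA.eigenvalues hn j

end LinearMap.IsSymmetric

theorem stmt4 {E : Type*} [NormedAddCommGroup E] [InnerProductSpace ℝ E]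
    [FiniteDimensional ℝ E] {n : ℕ} (hn : Module.finrank ℝ E = n)
    (A : E →ₗ[ℝ] E) (hAsym : A.IsSymmetric)
    (k : ℕ) (hk : 1 ≤ k) (hkn : k ≤ n) :
    IsLeast {x : ℝ | ∃ e : Fin k → E, Orthonormal ℝ e ∧ x = ∑ i, ⟪A (e i), e i⟫}
      (((Finset.univ : Finset (Fin n)).powersetCard k).inf'
        (Finset.powersetCard_nonempty.2 (by simpa using hkn))
        (fun s => ∑ i ∈ s, hAsym.eigenvalues hn i)) ∧
    (0 ≤ ((Finset.univ : Finset (Fin n)).powersetCard k).inf'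
        (Finset.powersetCard_nonempty.2 (by simpa using hkn))
        (fun s => ∑ i ∈ s, hAsym.eigenvalues hn i) ↔
      ∀ e : Fin k → E, Orthonormal ℝ e → 0 ≤ ∑ i, ⟪A (e i), e i⟫) := by
  have hne : (univ.powersetCard k : Finset (Finset (Fin n))).Nonempty :=
    powersetCard_nonempty.2 (by simpa using hkn)
  have hLeast :
      IsLeast {x : ℝ | ∃ e : Fin k → E, Orthonormal ℝ e ∧ x = ∑ i, ⟪A (e i), e i⟫}
        ((univ.powersetCard k).inf' hne fun s => ∑ i ∈ s, hAsym.eigenvalues hn i) := by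
    refine ⟨?_, ?_⟩
    · obtain ⟨e, he, hsum⟩ := hAsym.exists_orthonormal_sum_inner_eq_inf'_powersetCard hn hne
      exact ⟨e, he, hsum.symm⟩
    · rintro x ⟨e, he, rfl⟩
      exact hAsym.inf'_powersetCard_sum_eigenvalues_le hn hk hne he
  refine ⟨hLeast, ?_⟩
  rw [le_isGLB_iff hLeast.isGLB, mem_lowerBounds]
  exact ⟨fun h e he => h _ ⟨e, he, rfl⟩, fun h _ ⟨e, he, hx⟩ => hx ▸ h e he⟩
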